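/- arXiv:1708.03613 — 2 statements merged into one kernel-verified Lean document; each statement's English description precedes it below -/
import Mathlib

section
/- Let (Ω, F, P) be a probability space with a filtration (F_k)_{k∈ℕ}. Let (ω(k))_{k∈ℕ} be a sequence of nonnegative, integrable real random variables adapted to (F_k), and let (x_k) and (y_k) be sequences of nonnegative reals with ∑_{k=1}^∞ x_k < ∞ and ∑_{k=1}^∞ y_k < ∞. Suppose that for every k, E[ω(k+1) | F_k] ≤ (1 + x_k)·ω(k) + y_k almost surely. Then there exists a nonnegative random variable ω(∞) such that ω(k) → ω(∞) almost surely as k → ∞. -/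
/-!
Dividing by `A k = ∏_{j<k} (1 + x j)` and subtracting the discounted drift
`S k = ∑_{j<k} y j / A (j + 1)` turns `ω` into a supermartingale `Z k = ω k / A k - S k`, which is
bounded below by `-∑ y` because `ω ≥ 0` and `A ≥ 1`. A supermartingale bounded below converges a.s.,
and `A k`, `S k` converge since `∑ x` and `∑ y` do, so `ω k = A k * (Z k + S k)` converges a.s.
-/

open MeasureTheory Filter Topology

namespace MeasureTheory

variable {Ω : Type*} {m0 : MeasurableSpace Ω} {μ : Measure Ω} {ℱ : Filtration ℕ m0}

theorem Supermartingale.exists_ae_tendsto_of_ae_nonneg [IsFiniteMeasure μ] {f : ℕ → Ω → ℝ}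
    (hf : Supermartingale f ℱ μ) (hnonneg : ∀ n, 0 ≤ᵐ[μ] f n) :
    ∀ᵐ a ∂μ, ∃ c, Tendsto (fun n => f n a) atTop (𝓝 c) := by
  have hbdd : ∀ n, eLpNorm ((-f) n) 1 μ ≤ (∫ a, f 0 a ∂μ).toNNReal := by
    intro n
    rw [Pi.neg_apply, eLpNorm_neg, eLpNorm_one_eq_lintegral_enorm,
      ← ofReal_integral_norm_eq_lintegral_enorm (hf.integrable n)]
    refine ENNReal.ofReal_le_ofReal ?_
    calc ∫ a, ‖f n a‖ ∂μ = ∫ a, f n a ∂μ :=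
          integral_congr_ae <| by
            filter_upwards [hnonneg n] with a ha using Real.norm_of_nonneg ha
      _ ≤ ∫ a, f 0 a ∂μ := by simpa using hf.setIntegral_le (Nat.zero_le n) MeasurableSet.univ
  filter_upwards [hf.neg.exists_ae_tendsto_of_bdd hbdd] with a ⟨c, hc⟩
  exact ⟨-c, by simpa using hc.neg⟩

theorem Supermartingale.exists_ae_tendsto_of_ae_bddBelow [IsFiniteMeasure μ] {f : ℕ → Ω → ℝ}
    (hf : Supermartingale f ℱ μ) (C : ℝ) (hC : ∀ n, ∀ᵐ a ∂μ, C ≤ f n a) :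
    ∀ᵐ a ∂μ, ∃ c, Tendsto (fun n => f n a) atTop (𝓝 c) := by
  have hshift := (hf.sub_martingale (martingale_const ℱ μ C)).exists_ae_tendsto_of_ae_nonneg
    fun n => by filter_upwards [hC n] with a ha using sub_nonneg.2 ha
  filter_upwards [hshift] with a ⟨c, hc⟩
  exact ⟨c + C, by simpa using hc.add_const C⟩

end MeasureTheory

namespace RobbinsSiegmund

variable {Ω : Type*} {m0 : MeasurableSpace Ω} (x y : ℕ → ℝ)

noncomputable section

def growth (k : ℕ) : ℝ := ∏ j ∈ Finset.range k, (1 + x j)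

def discountedSum (k : ℕ) : ℝ := ∑ j ∈ Finset.range k, y j / growth x (j + 1)

def normalized (ω : ℕ → Ω → ℝ) (k : ℕ) (a : Ω) : ℝ :=
  ω k a / growth x k - discountedSum x y k

end

variable {x y}

theorem growth_succ (k : ℕ) : growth x (k + 1) = growth x k * (1 + x k) :=
  Finset.prod_range_succ _ _

theorem one_le_growth (hx : ∀ k, 0 ≤ x k) (k : ℕ) : 1 ≤ growth x k :=
  Finset.one_le_prod fun j _ => le_add_of_nonneg_right (hx j)

theorem growth_pos (hx : ∀ k, 0 ≤ x k) (k : ℕ) : 0 < growth x k :=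
  one_pos.trans_le (one_le_growth hx k)

theorem exists_tendsto_growth (hxsum : Summable x) : ∃ L, Tendsto (growth x) atTop (𝓝 L) :=
  ⟨_, (Real.multipliable_one_add_of_summable hxsum).tendsto_prod_tprod_nat⟩

theorem discountedSum_succ (k : ℕ) :
    discountedSum x y (k + 1) = discountedSum x y k + y k / growth x (k + 1) :=
  Finset.sum_range_succ _ _

theorem div_growth_le (hx : ∀ k, 0 ≤ x k) (hy : ∀ k, 0 ≤ y k) (j : ℕ) :
    y j / growth x (j + 1) ≤ y j :=
  div_le_self (hy j) (one_le_growth hx _)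

theorem discountedSum_le_tsum (hx : ∀ k, 0 ≤ x k) (hy : ∀ k, 0 ≤ y k) (hysum : Summable y)
    (k : ℕ) : discountedSum x y k ≤ ∑' j, y j :=
  (Finset.sum_le_sum fun j _ => div_growth_le hx hy j).trans
    (hysum.sum_le_tsum _ fun j _ => hy j)

theorem exists_tendsto_discountedSum (hx : ∀ k, 0 ≤ x k) (hy : ∀ k, 0 ≤ y k)
    (hysum : Summable y) : ∃ S, Tendsto (discountedSum x y) atTop (𝓝 S) :=
  ⟨_, (Summable.of_nonneg_of_le (fun j => div_nonneg (hy j) (growth_pos hx _).le)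
    (div_growth_le hx hy) hysum).hasSum.tendsto_sum_nat⟩

theorem eq_growth_mul_normalized_add (hx : ∀ k, 0 ≤ x k) (ω : ℕ → Ω → ℝ) (k : ℕ) (a : Ω) :
    ω k a = growth x k * (normalized x y ω k a + discountedSum x y k) := by
  rw [normalized, sub_add_cancel, mul_div_cancel₀ _ (growth_pos hx k).ne']

theorem normalized_ae_ge {P : Measure Ω} {ω : ℕ → Ω → ℝ} (hnonneg : ∀ k, 0 ≤ᵐ[P] ω k)
    (hx : ∀ k, 0 ≤ x k) (hy : ∀ k, 0 ≤ y k) (hysum : Summable y) (k : ℕ) :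
    ∀ᵐ a ∂P, -∑' j, y j ≤ normalized x y ω k a := by
  filter_upwards [hnonneg k] with a ha
  have hratio := div_nonneg ha (growth_pos hx k).le
  have hsum := discountedSum_le_tsum hx hy hysum k
  rw [normalized]
  linarith

theorem growth_succ_inv_mul (hx : ∀ k, 0 ≤ x k) (k : ℕ) (w : ℝ) :
    (growth x (k + 1))⁻¹ * ((1 + x k) * w + y k) =
      w / growth x k + y k / growth x (k + 1) := by
  have h1 : 1 + x k ≠ 0 := by linarith [hx k]
  have h2 := (growth_pos hx k).ne'
  rw [growth_succ]
  field_simp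

theorem supermartingale_normalized {P : Measure Ω} [IsFiniteMeasure P] {ℱ : Filtration ℕ m0}
    {ω : ℕ → Ω → ℝ} (hadapted : Adapted ℱ ω) (hint : ∀ k, Integrable (ω k) P)
    (hx : ∀ k, 0 ≤ x k)
    (hcond : ∀ k, P[ω (k + 1) | ℱ k] ≤ᵐ[P] fun a => (1 + x k) * ω k a + y k) :
    Supermartingale (normalized x y ω) ℱ P := by
  refine supermartingale_nat (Adapted.stronglyAdapted fun k => ?_)
    (fun k => ((hint k).div_const _).sub (integrable_const _)) fun k => ?_
  · exact ((hadapted k).div_const _).sub_const _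
  have hscaled : normalized x y ω (k + 1) =
      (growth x (k + 1))⁻¹ • ω (k + 1) - fun _ => discountedSum x y (k + 1) := by
    funext a
    simp [normalized, div_eq_inv_mul]
  have hcondExp : P[normalized x y ω (k + 1) | ℱ k] =ᵐ[P]
      fun a => (growth x (k + 1))⁻¹ * P[ω (k + 1) | ℱ k] a - discountedSum x y (k + 1) := by
    rw [hscaled]
    refine (condExp_sub ((hint (k + 1)).smul _) (integrable_const _) (ℱ k)).trans ?_
    rw [condExp_const (ℱ.le k)]
    filter_upwards [condExp_smul (μ := P) (m := ℱ k) (growth x (k + 1))⁻¹ (ω (k + 1))]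
      with a ha
    simp [ha]
  filter_upwards [hcondExp, hcond k] with a ha hle
  rw [ha, normalized, discountedSum_succ]
  have hscaledLe := mul_le_mul_of_nonneg_left hle (inv_nonneg.2 (growth_pos hx (k + 1)).le)
  rw [growth_succ_inv_mul hx] at hscaledLe
  linarith

end RobbinsSiegmund

open RobbinsSiegmund in
/-- **Almost-supermartingale convergence (Robbins–Siegmund type lemma).**
If `(ω k)` is a nonnegative, integrable, adapted process satisfying
`E[ω (k+1) | ℱ k] ≤ (1 + x k) * ω k + y k` a.s. with `∑ x k < ∞` and `∑ y k < ∞`,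
then `ω k` converges almost surely to some nonnegative random variable. -/
theorem stmt0 {Ω : Type*} {m0 : MeasurableSpace Ω} (P : Measure Ω) [IsProbabilityMeasure P]
    (ℱ : Filtration ℕ m0) (ω : ℕ → Ω → ℝ)
    (hadapted : Adapted ℱ ω)
    (hint : ∀ k, Integrable (ω k) P)
    (hnonneg : ∀ k, 0 ≤ᵐ[P] ω k)
    (x y : ℕ → ℝ)
    (hx : ∀ k, 0 ≤ x k) (hy : ∀ k, 0 ≤ y k)
    (hxsum : Summable x) (hysum : Summable y)
    (hcond : ∀ k, P[ω (k + 1) | ℱ k] ≤ᵐ[P] fun a => (1 + x k) * ω k a + y k) :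
    ∃ W : Ω → ℝ, ∀ᵐ a ∂P, 0 ≤ W a ∧ Tendsto (fun k => ω k a) atTop (nhds (W a)) := by
  obtain ⟨L, hL⟩ := exists_tendsto_growth hxsum
  obtain ⟨S, hS⟩ := exists_tendsto_discountedSum hx hy hysum
  have hZ := supermartingale_normalized (y := y) hadapted hint hx hcond
  have hconv := hZ.exists_ae_tendsto_of_ae_bddBelow _ (normalized_ae_ge hnonneg hx hy hysum)
  refine ⟨fun a => limUnder atTop fun k => ω k a, ?_⟩
  filter_upwards [hconv, ae_all_iff.2 hnonneg] with a ⟨c, hc⟩ hpos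
  have hlim : Tendsto (fun k => ω k a) atTop (𝓝 (L * (c + S))) :=
    (hL.mul (hc.add hS)).congr fun k => (eq_growth_mul_normalized_add hx ω k a).symm
  rw [hlim.limUnder_eq]
  exact ⟨ge_of_tendsto' hlim hpos, hlim⟩
end

section
/- Let (Ω, F, P) be a probability space with filtration (F_k)_{k∈ℕ}. Let μ* ∈ ℝⁿ with μ* ≥ 0 componentwise, let G > 0, and let (ε_k) be nonnegative reals with ∑_{k=1}^∞ ε_k² < ∞. For each k let h_k : ℝⁿ → ℝ be a concave function maximized at μ*, i.e., h_k(μ) ≤ h_k(μ*) for all μ ∈ ℝⁿ. Let (μ(k)) be a process adapted to (F_k) with values in the nonnegative orthant ℝⁿ₊, and let g(k+1) be F_{k+1}-measurable ℝⁿ-valued random vectors such that, almost surely, E[‖g(k+1)‖² | F_k] ≤ G² and E[g(k+1) | F_k] is a supergradient of h_k at μ(k). Suppose the process evolves as μ(k+1) = proj₊( μ(k) + ε_k · g(k+1) ) for all k. Then ‖μ(k) − μ*‖² converges almost surely to a nonnegative random variable as k → ∞. -/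
open MeasureTheory Filter RealInnerProductSpace

noncomputable def projPos {n : ℕ} (x : EuclideanSpace ℝ (Fin n)) : EuclideanSpace ℝ (Fin n) :=
  WithLp.toLp 2 (fun j => max (x j) 0)

/-!
Write `V k = ‖μ(k) - μ*‖²`. The projection onto the orthant does not increase the distance to
`μ* ≥ 0`, so `V (k+1) ≤ V k + 2 ε_k ⟪μ(k) - μ*, g(k+1)⟫ + ε_k² ‖g(k+1)‖²`. Conditioning on `F_k`
replaces `g(k+1)` by a supergradient of `h_k` at `μ(k)`, and since `μ*` maximizes `h_k` the
middle term becomes nonpositive: `E[V (k+1) | F_k] ≤ V k + ε_k² G²`. Hence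
`V k + G² ∑_{j ≥ k} ε_j²` is a nonnegative supermartingale, which converges almost surely.
As `μ(0)` need not be integrable, the argument is run on each `F_0`-measurable event
`{‖μ(0) - μ*‖ ≤ M}`, on which all iterates are square integrable.
-/

open scoped Topology

section Convergence

variable {Ω : Type*} {m0 : MeasurableSpace Ω} {P : Measure Ω} [IsFiniteMeasure P]
  {ℱ : Filtration ℕ m0}

theorem MeasureTheory.Supermartingale.exists_ae_tendsto_of_nonneg {S : ℕ → Ω → ℝ}
    (hS : Supermartingale S ℱ P) (hnonneg : ∀ k, 0 ≤ᵐ[P] S k) :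
    ∀ᵐ a ∂P, ∃ l, Tendsto (fun k => S k a) atTop (𝓝 l) := by
  have hbdd : ∀ k, eLpNorm (-S k) 1 P ≤ (ENNReal.ofReal (∫ a, S 0 a ∂P)).toNNReal := by
    intro k
    rw [ENNReal.coe_toNNReal ENNReal.ofReal_ne_top, eLpNorm_neg, eLpNorm_one_eq_lintegral_enorm,
      ← ofReal_integral_norm_eq_lintegral_enorm (hS.integrable k)]
    refine ENNReal.ofReal_le_ofReal ?_
    calc ∫ a, ‖S k a‖ ∂P = ∫ a, S k a ∂P :=
          integral_congr_ae <| (hnonneg k).mono fun a ha => Real.norm_of_nonneg ha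
      _ ≤ ∫ a, S 0 a ∂P := by
          simpa using hS.setIntegral_le (Nat.zero_le k) MeasurableSet.univ
  filter_upwards [hS.neg.exists_ae_tendsto_of_bdd hbdd] with a ⟨l, hl⟩
  exact ⟨-l, by simpa using hl.neg⟩

theorem ae_tendsto_of_condExp_le_add_summable {X : ℕ → Ω → ℝ} {c : ℕ → ℝ}
    (hX : StronglyAdapted ℱ X) (hint : ∀ k, Integrable (X k) P) (hnonneg : ∀ k, 0 ≤ᵐ[P] X k)
    (hc : ∀ k, 0 ≤ c k) (hcsum : Summable c)
    (hstep : ∀ k, P[X (k + 1) | ℱ k] ≤ᵐ[P] fun a => X k a + c k) :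
    ∀ᵐ a ∂P, ∃ l, Tendsto (fun k => X k a) atTop (𝓝 l) := by
  set tail : ℕ → ℝ := fun k => ∑' j, c (j + k)
  have htail : ∀ k, tail k = c k + tail (k + 1) := fun k => by
    simpa [tail, add_assoc, add_comm 1 k] using
      ((summable_nat_add_iff k).2 hcsum).tsum_eq_zero_add
  set S : ℕ → Ω → ℝ := fun k a => X k a + tail k
  have hS : Supermartingale S ℱ P := by
    refine supermartingale_nat (fun k => (hX k).add stronglyMeasurable_const)
      (fun k => (hint k).add (integrable_const _)) fun k => ?_
    have hSsucc : S (k + 1) = X (k + 1) + fun _ => tail (k + 1) := rfl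
    filter_upwards [condExp_add (hint (k + 1)) (integrable_const (tail (k + 1))) (ℱ k), hstep k]
      with a hadd hle
    rw [hSsucc, hadd, Pi.add_apply, condExp_const (ℱ.le k)]
    simp only [S, htail k]
    linarith
  have hSnonneg : ∀ k, 0 ≤ᵐ[P] S k := fun k => (hnonneg k).mono fun a ha =>
    add_nonneg ha (tsum_nonneg fun j => hc (j + k))
  filter_upwards [hS.exists_ae_tendsto_of_nonneg hSnonneg] with a ⟨l, hl⟩
  have hlim := hl.sub (tendsto_sum_nat_add c)
  simp only [S, tail, add_sub_cancel_right, sub_zero] at hlim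
  exact ⟨l, hlim⟩

end Convergence

section ProjectedStep

variable {E : Type*} [NormedAddCommGroup E] [InnerProductSpace ℝ E]

theorem norm_sq_le_of_norm_le_norm_add_smul {x y v : E} {t : ℝ} (h : ‖y‖ ≤ ‖x + t • v‖) :
    ‖y‖ ^ 2 ≤ ‖x‖ ^ 2 + 2 * t * ⟪x, v⟫ + t ^ 2 * ‖v‖ ^ 2 :=
  calc ‖y‖ ^ 2 ≤ ‖x + t • v‖ ^ 2 := by gcongr
    _ = ‖x‖ ^ 2 + 2 * t * ⟪x, v⟫ + t ^ 2 * ‖v‖ ^ 2 := by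
      rw [norm_add_sq_real, inner_smul_right, norm_smul, mul_pow, Real.norm_eq_abs, sq_abs]
      ring

variable [CompleteSpace E] {Ω : Type*} {m m0 : MeasurableSpace Ω} {P : Measure Ω}
  [IsFiniteMeasure P]

theorem condExp_norm_sq_le_of_norm_le_norm_add_smul (hm : m ≤ m0) {x y v : Ω → E} {t C : ℝ}
    (ht : 0 ≤ t) (hxm : StronglyMeasurable[m] x) (hx : MemLp x 2 P) (hy : MemLp y 2 P)
    (hv : MemLp v 2 P) (hstep : ∀ a, ‖y a‖ ≤ ‖x a + t • v a‖)
    (hdesc : ∀ᵐ a ∂P, ⟪x a, P[v | m] a⟫ ≤ 0)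
    (hbound : ∀ᵐ a ∂P, P[fun a => ‖v a‖ ^ 2 | m] a ≤ C) :
    P[fun a => ‖y a‖ ^ 2 | m] ≤ᵐ[P] fun a => ‖x a‖ ^ 2 + t ^ 2 * C := by
  have hx2 := (memLp_two_iff_integrable_sq_norm hx.1).1 hx
  have hv2 := (memLp_two_iff_integrable_sq_norm hv.1).1 hv
  have hxv : Integrable (fun a => ⟪x a, v a⟫) P :=
    memLp_one_iff_integrable.1 ((innerSL ℝ).memLp_of_bilin 1 hx hv)
  set R : Ω → ℝ :=
    (fun a => ‖x a‖ ^ 2) + (2 * t) • (fun a => ⟪x a, v a⟫) + t ^ 2 • fun a => ‖v a‖ ^ 2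
  have hR : Integrable R P := (hx2.add (hxv.smul (2 * t))).add (hv2.smul (t ^ 2))
  have hle : (fun a => ‖y a‖ ^ 2) ≤ᵐ[P] R := ae_of_all _ fun a => by
    simpa [R, mul_assoc] using norm_sq_le_of_norm_le_norm_add_smul (hstep a)
  have hcondR : P[R | m] =ᵐ[P] fun a =>
      ‖x a‖ ^ 2 + 2 * t * ⟪x a, P[v | m] a⟫ + t ^ 2 * P[fun a => ‖v a‖ ^ 2 | m] a := by
    have hpull : P[fun a => ⟪x a, v a⟫ | m] =ᵐ[P] fun a => ⟪x a, P[v | m] a⟫ :=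
      condExp_bilin_of_stronglyMeasurable_left (innerSL ℝ) hxm hxv (hv.integrable one_le_two)
    filter_upwards [condExp_add (hx2.add (hxv.smul (2 * t))) (hv2.smul (t ^ 2)) m,
      condExp_add hx2 (hxv.smul (2 * t)) m, condExp_smul (2 * t) (fun a => ⟪x a, v a⟫) m,
      condExp_smul (t ^ 2) (fun a => ‖v a‖ ^ 2) m, hpull] with a h1 h2 h3 h4 h5
    rw [h1, Pi.add_apply, h2, Pi.add_apply, h3, h4, Pi.smul_apply, Pi.smul_apply, h5,
      condExp_of_stronglyMeasurable (f := fun a => ‖x a‖ ^ 2) hm (hxm.norm.pow 2) hx2,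
      smul_eq_mul, smul_eq_mul]
  filter_upwards [condExp_mono (m := m) ((memLp_two_iff_integrable_sq_norm hy.1).1 hy) hR hle,
    hcondR, hdesc, hbound] with a hmono hRa hdesca hbounda
  rw [hRa] at hmono
  nlinarith [mul_nonpos_of_nonneg_of_nonpos ht hdesca,
    mul_le_mul_of_nonneg_left hbounda (sq_nonneg t)]

end ProjectedStep

section ProjectedIteration

variable {E : Type*} [NormedAddCommGroup E] [InnerProductSpace ℝ E] [CompleteSpace E]
  {Ω : Type*} {m0 : MeasurableSpace Ω} {P : Measure Ω} [IsFiniteMeasure P]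
  {ℱ : Filtration ℕ m0} {μstar : E} {G : ℝ} {ε : ℕ → ℝ} {μproc g : ℕ → Ω → E}

theorem ae_tendsto_norm_sub_sq_of_bounded_start (hμ : StronglyAdapted ℱ μproc)
    (hε : ∀ k, 0 ≤ ε k) (hεsq : Summable fun k => ε k ^ 2) (hg : ∀ k, MemLp (g (k + 1)) 2 P)
    (hbound : ∀ k, ∀ᵐ a ∂P, P[fun a' => ‖g (k + 1) a'‖ ^ 2 | ℱ k] a ≤ G ^ 2)
    (hdesc : ∀ k, ∀ᵐ a ∂P, ⟪μproc k a - μstar, P[g (k + 1) | ℱ k] a⟫ ≤ 0)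
    (hstep : ∀ k a, ‖μproc (k + 1) a - μstar‖ ≤ ‖μproc k a - μstar + ε k • g (k + 1) a‖)
    {M : ℝ} (h0 : ∀ a, ‖μproc 0 a - μstar‖ ≤ M) :
    ∀ᵐ a ∂P, ∃ l, Tendsto (fun k => ‖μproc k a - μstar‖ ^ 2) atTop (𝓝 l) := by
  have hx : ∀ k, StronglyMeasurable[ℱ k] fun a => μproc k a - μstar :=
    fun k => (hμ k).sub stronglyMeasurable_const
  have hmem : ∀ k, MemLp (fun a => μproc k a - μstar) 2 P := by
    intro k
    induction k with
    | zero => exact .of_bound ((hx 0).mono (ℱ.le 0)).aestronglyMeasurable M (ae_of_all _ h0)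
    | succ k ih =>
      refine (ih.norm.add ((hg k).norm.const_mul (ε k))).of_le
        ((hx (k + 1)).mono (ℱ.le _)).aestronglyMeasurable (ae_of_all _ fun a => ?_)
      calc ‖μproc (k + 1) a - μstar‖ ≤ ‖μproc k a - μstar + ε k • g (k + 1) a‖ := hstep k a
        _ ≤ ‖μproc k a - μstar‖ + ε k * ‖g (k + 1) a‖ := by
          simpa [norm_smul, abs_of_nonneg (hε k)] using norm_add_le _ (ε k • g (k + 1) a)
        _ ≤ ‖‖μproc k a - μstar‖ + ε k * ‖g (k + 1) a‖‖ := Real.le_norm_self _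
  exact ae_tendsto_of_condExp_le_add_summable (c := fun k => ε k ^ 2 * G ^ 2)
    (fun k => (hx k).norm.pow 2) (fun k => (memLp_two_iff_integrable_sq_norm (hmem k).1).1 (hmem k))
    (fun k => ae_of_all _ fun a => sq_nonneg _) (fun k => by positivity) (hεsq.mul_right _)
    fun k => condExp_norm_sq_le_of_norm_le_norm_add_smul (ℱ.le k) (hε k) (hx k) (hmem k)
      (hmem (k + 1)) (hg k) (hstep k) (hdesc k) (hbound k)

theorem ae_tendsto_norm_sub_sq (hμ : StronglyAdapted ℱ μproc)
    (hε : ∀ k, 0 ≤ ε k) (hεsq : Summable fun k => ε k ^ 2) (hg : ∀ k, MemLp (g (k + 1)) 2 P)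
    (hbound : ∀ k, ∀ᵐ a ∂P, P[fun a' => ‖g (k + 1) a'‖ ^ 2 | ℱ k] a ≤ G ^ 2)
    (hdesc : ∀ k, ∀ᵐ a ∂P, ⟪μproc k a - μstar, P[g (k + 1) | ℱ k] a⟫ ≤ 0)
    (hstep : ∀ k a, ‖μproc (k + 1) a - μstar‖ ≤ ‖μproc k a - μstar + ε k • g (k + 1) a‖) :
    ∀ᵐ a ∂P, ∃ l, Tendsto (fun k => ‖μproc k a - μstar‖ ^ 2) atTop (𝓝 l) := by
  classical
  suffices ∀ M : ℕ, ∀ᵐ a ∂P, ‖μproc 0 a - μstar‖ ≤ M →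
      ∃ l, Tendsto (fun k => ‖μproc k a - μstar‖ ^ 2) atTop (𝓝 l) by
    filter_upwards [ae_all_iff.2 this] with a ha using ha _ (Nat.le_ceil _)
  intro M
  set A := {a | ‖μproc 0 a - μstar‖ ≤ M}
  have hA : ∀ k, MeasurableSet[ℱ k] A := fun k => ℱ.mono (Nat.zero_le k) _ <|
    measurableSet_le ((hμ 0).sub stronglyMeasurable_const).norm.measurable measurable_const
  -- Freezing the iterates at `μstar` off `A` keeps every hypothesis and bounds the start by `M`.
  set ν : ℕ → Ω → E := fun k => A.piecewise (μproc k) fun _ => μstar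
  have hν : ∀ᵐ a ∂P, ∃ l, Tendsto (fun k => ‖ν k a - μstar‖ ^ 2) atTop (𝓝 l) := by
    refine ae_tendsto_norm_sub_sq_of_bounded_start (M := M)
      (fun k => (hμ k).piecewise (hA k) stronglyMeasurable_const) hε hεsq hg hbound
      (fun k => ?_) (fun k a => ?_) (fun a => ?_)
    · filter_upwards [hdesc k] with a ha
      by_cases haA : a ∈ A <;> simp [ν, haA, ha]
    · by_cases haA : a ∈ A <;> simp [ν, haA, hstep k a]
    · by_cases haA : a ∈ A
      · simp only [ν, Set.piecewise_eq_of_mem _ _ _ haA]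
        exact haA
      · simp [ν, haA]
  filter_upwards [hν] with a ha (haA : a ∈ A)
  simpa only [ν, Set.piecewise_eq_of_mem _ _ _ haA] using ha

end ProjectedIteration

theorem norm_projPos_sub_le {n : ℕ} (x y : EuclideanSpace ℝ (Fin n)) (hy : ∀ j, 0 ≤ y j) :
    ‖projPos x - y‖ ≤ ‖x - y‖ := by
  rw [EuclideanSpace.norm_eq, EuclideanSpace.norm_eq]
  gcongr with j
  simpa [projPos, max_eq_left (hy j)] using abs_max_sub_max_le_abs (x j) (y j) 0

theorem stmt6_general {Ω : Type*} {m0 : MeasurableSpace Ω} (P : Measure Ω) [IsProbabilityMeasure P]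
    (ℱ : Filtration ℕ m0) {n : ℕ}
    (μstar : EuclideanSpace ℝ (Fin n)) (hμstar : ∀ j, 0 ≤ μstar j)
    (G : ℝ)
    (ε : ℕ → ℝ) (hε : ∀ k, 0 ≤ ε k) (hεsq : Summable fun k => (ε k) ^ 2)
    (h : ℕ → EuclideanSpace ℝ (Fin n) → ℝ)
    (hmax : ∀ k ν, h k ν ≤ h k μstar)
    (μproc : ℕ → Ω → EuclideanSpace ℝ (Fin n))
    (hadapted : Adapted ℱ μproc)
    (g : ℕ → Ω → EuclideanSpace ℝ (Fin n))
    (hgmeas : ∀ k, StronglyMeasurable[ℱ (k + 1)] (g (k + 1)))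
    (hgsqint : ∀ k, Integrable (fun a => ‖g (k + 1) a‖ ^ 2) P)
    (hbound : ∀ k, ∀ᵐ a ∂P, (P[fun a' => ‖g (k + 1) a'‖ ^ 2 | ℱ k]) a ≤ G ^ 2)
    (hsupergrad : ∀ k, ∀ᵐ a ∂P, ∀ ν,
      h k ν ≤ h k (μproc k a) + ⟪(P[g (k + 1) | ℱ k]) a, ν - μproc k a⟫)
    (hupdate : ∀ k a, μproc (k + 1) a = projPos (μproc k a + ε k • g (k + 1) a)) :
    ∃ W : Ω → ℝ, ∀ᵐ a ∂P, 0 ≤ W a ∧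
      Tendsto (fun k => ‖μproc k a - μstar‖ ^ 2) atTop (nhds (W a)) := by
  have hg : ∀ k, MemLp (g (k + 1)) 2 P := fun k =>
    (memLp_two_iff_integrable_sq_norm ((hgmeas k).mono (ℱ.le _)).aestronglyMeasurable).2
      (hgsqint k)
  have hdesc : ∀ k, ∀ᵐ a ∂P, ⟪μproc k a - μstar, P[g (k + 1) | ℱ k] a⟫ ≤ 0 := fun k => by
    filter_upwards [hsupergrad k] with a ha
    have hsup := ha μstar
    have hmaxk := hmax k (μproc k a)
    rw [← neg_sub, inner_neg_left, real_inner_comm]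
    linarith
  have hstep : ∀ k a, ‖μproc (k + 1) a - μstar‖ ≤ ‖μproc k a - μstar + ε k • g (k + 1) a‖ :=
    fun k a => by
      rw [hupdate, sub_add_eq_add_sub]
      exact norm_projPos_sub_le _ _ hμstar
  refine ⟨fun a => limUnder atTop fun k => ‖μproc k a - μstar‖ ^ 2, ?_⟩
  filter_upwards [ae_tendsto_norm_sub_sq (fun k => (hadapted k).stronglyMeasurable) hε hεsq hg
    hbound hdesc hstep] with a hconv
  have hlim := tendsto_nhds_limUnder hconv
  exact ⟨ge_of_tendsto' hlim fun k => sq_nonneg _, hlim⟩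

/-- **Almost sure convergence of the stochastic dual algorithm** (cf. Theorem 3 of the paper).
With square-summable stepsizes, bounded conditional second moments of the stochastic
supergradients, and each `h k` concave and maximized at `μ* ≥ 0`, the projected stochastic
supergradient iteration `μ(k+1) = [μ(k) + ε_k g(k+1)]₊` is such that `‖μ(k) − μ*‖²`
converges almost surely (hence so does `μ(k)`). -/
theorem stmt6 {Ω : Type*} {m0 : MeasurableSpace Ω} (P : Measure Ω) [IsProbabilityMeasure P]
    (ℱ : Filtration ℕ m0) {n : ℕ}
    (μstar : EuclideanSpace ℝ (Fin n)) (hμstar : ∀ j, 0 ≤ μstar j)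
    (G : ℝ) (hG : 0 < G)
    (ε : ℕ → ℝ) (hε : ∀ k, 0 ≤ ε k) (hεsq : Summable fun k => (ε k) ^ 2)
    (h : ℕ → EuclideanSpace ℝ (Fin n) → ℝ)
    (hconc : ∀ k, ConcaveOn ℝ Set.univ (h k))
    (hmax : ∀ k ν, h k ν ≤ h k μstar)
    (μproc : ℕ → Ω → EuclideanSpace ℝ (Fin n))
    (hadapted : Adapted ℱ μproc)
    (hpos : ∀ k a j, 0 ≤ μproc k a j)
    (g : ℕ → Ω → EuclideanSpace ℝ (Fin n))
    (hgmeas : ∀ k, StronglyMeasurable[ℱ (k + 1)] (g (k + 1)))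
    (hgint : ∀ k, Integrable (g (k + 1)) P)
    (hgsqint : ∀ k, Integrable (fun a => ‖g (k + 1) a‖ ^ 2) P)
    (hbound : ∀ k, ∀ᵐ a ∂P, (P[fun a' => ‖g (k + 1) a'‖ ^ 2 | ℱ k]) a ≤ G ^ 2)
    (hsupergrad : ∀ k, ∀ᵐ a ∂P, ∀ ν,
      h k ν ≤ h k (μproc k a) + ⟪(P[g (k + 1) | ℱ k]) a, ν - μproc k a⟫)
    (hupdate : ∀ k a, μproc (k + 1) a = projPos (μproc k a + ε k • g (k + 1) a)) :
    ∃ W : Ω → ℝ, ∀ᵐ a ∂P, 0 ≤ W a ∧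
      Tendsto (fun k => ‖μproc k a - μstar‖ ^ 2) atTop (nhds (W a)) :=
  stmt6_general P ℱ μstar hμstar G ε hε hεsq h hmax μproc hadapted g hgmeas hgsqint hbound
    hsupergrad hupdate
end
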